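/- arXiv:2112.06249 — 5 statements merged into one kernel-verified Lean document; each statement's English description precedes it below -/
import Mathlib

section
/- Let n, m ≥ 1 be integers, 1 ≤ l ≤ m and 0 < α < mn. Let g, h_1, …, h_m be measurable functions on ℝ^n such that ∫_{ℝ^n} ∫_{(ℝ^n)^m} |g(x)| ∏_{j=1}^m |h_j(y_j)| / (|x−y_1|+⋯+|x−y_m|)^{mn−α} dy_1⋯dy_m dx < ∞. Then Π_l(g, h_1, …, h_m) belongs to L^1(ℝ^n) and ∫_{ℝ^n} Π_l(g, h_1, …, h_m)(x) dx = 0. -/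
/-!
Put `F(x, y) = g(x) ∏ⱼ hⱼ(yⱼ) / (∑ⱼ |x - yⱼ|)^{mn-α}` on `ℝⁿ × (ℝⁿ)ᵐ`; the hypothesis says exactly
that `F` is integrable. Then `g · I_α(h)(x) = ∫ F(x, y) dy`, and
`h_l · (I_α^*)_l(h₁, …, g, …, h_m)(x) = ∫ F(σ(x, y)) dy`, where `σ` exchanges `x` with `y_l`.
Since `σ` is a permutation of coordinates it preserves Lebesgue measure, so by Fubini both terms
are integrable in `x` and have the same integral.
-/

open MeasureTheory ENNReal Filter Metric

noncomputable section

/-- Euclidean space `ℝⁿ`. -/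
abbrev En (n : ℕ) : Type := EuclideanSpace ℝ (Fin n)

/-- The multilinear fractional integral operator `I_α`. -/
def mfi (n m : ℕ) (α : ℝ) (f : Fin m → En n → ℝ) (x : En n) : ℝ :=
  ∫ y : Fin m → En n, (∏ j, f j (y j)) / (∑ j, dist x (y j)) ^ ((m * n : ℝ) - α)

/-- The `l`-th partial adjoint `(I_α^*)_l`. -/
def mfiAdj (n m : ℕ) (α : ℝ) (l : Fin m) (f : Fin m → En n → ℝ) (x : En n) : ℝ :=
  ∫ y : Fin m → En n, (∏ j, f j (y j)) /
    (dist (y l) x + ∑ j ∈ Finset.univ.erase l, dist (y l) (y j)) ^ ((m * n : ℝ) - α)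

/-- The multilinear "multiplication" operator `Π_l`. -/
def PiOp (n m : ℕ) (α : ℝ) (l : Fin m) (g : En n → ℝ) (h : Fin m → En n → ℝ)
    (x : En n) : ℝ :=
  h l x * mfiAdj n m α l (Function.update h l g) x - g x * mfi n m α h x

/-- The `l`-th commutator `[b, I_α]_l`. -/
def commOp (n m : ℕ) (α : ℝ) (l : Fin m) (b : En n → ℝ) (f : Fin m → En n → ℝ)
    (x : En n) : ℝ :=
  mfi n m α (Function.update f l (fun y => b y * f l y)) x - b x * mfi n m α f x

/-- The weighted Lebesgue norm `‖f‖_{L^p(w)}`. -/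
def wNorm (n : ℕ) (p : ℝ) (w f : En n → ℝ) : ℝ≥0∞ :=
  (∫⁻ x, ENNReal.ofReal (|f x| ^ p * w x)) ^ (1 / p)

/-- The (axis-parallel, closed) cube with corner `c` and side `r`. -/
def cube (n : ℕ) (c : En n) (r : ℝ) : Set (En n) := {y | ∀ i, c i ≤ y i ∧ y i ≤ c i + r}

/-- The weight `μ_{ω⃗} = ∏ ω_i^q`. -/
def muw (n m : ℕ) (q : ℝ) (ω : Fin m → En n → ℝ) (x : En n) : ℝ := ∏ i, ω i x ^ q

/-- The multilinear weight class `A_{P⃗,q}`. -/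
def MemApq (n m : ℕ) (p : Fin m → ℝ) (q : ℝ) (ω : Fin m → En n → ℝ) : Prop :=
  (∀ i x, 0 ≤ ω i x) ∧ (∀ i, LocallyIntegrable (ω i) volume) ∧
  ∃ A : ℝ≥0∞, A ≠ ⊤ ∧ ∀ (c : En n) (r : ℝ), 0 < r →
    ((volume (cube n c r))⁻¹ * ∫⁻ x in cube n c r, ENNReal.ofReal (muw n m q ω x)) *
      ∏ i, (((volume (cube n c r))⁻¹ *
          ∫⁻ x in cube n c r, ENNReal.ofReal (ω i x ^ (-(p i / (p i - 1))))) ^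
        (q / (p i / (p i - 1)))) ≤ A

/-- A `(1,t,0)`-atom (with `t = ⊤` allowed). -/
def Atom10 (n : ℕ) (t : ℝ≥0∞) (a : En n → ℝ) : Prop :=
  Measurable a ∧ ∃ (c : En n) (r : ℝ), 0 < r ∧ (∀ x, x ∉ ball c r → a x = 0) ∧
    eLpNorm a t volume ≤ (volume (ball c r)) ^ (1 / t.toReal - 1) ∧
    (∫ x, a x) = 0

/-- The atomic `H^1` norm of `f`. -/
def H1norm (n : ℕ) (f : En n → ℝ) : ℝ≥0∞ :=
  ⨅ (lam : ℕ → ℝ) (a : ℕ → En n → ℝ)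
    (_ : (∀ k, Atom10 n ⊤ (a k)) ∧
      Tendsto (fun K => eLpNorm (fun x => f x - ∑ k ∈ Finset.range K, lam k * a k x) 1 volume)
        atTop (nhds 0)),
    ∑' k, ENNReal.ofReal |lam k|

/-- The `BMO` norm of `b`. -/
def BMOnorm (n : ℕ) (b : En n → ℝ) : ℝ≥0∞ :=
  ⨆ (c : En n) (r : ℝ) (_ : 0 < r),
    (volume (cube n c r))⁻¹ *
      ∫⁻ x in cube n c r, ENNReal.ofReal |b x - ⨍ y in cube n c r, b y|

open Finset in
@[to_additive]
theorem Fintype.prod_apply_update {ι M : Type*} {β : ι → Type*} [Fintype ι] [DecidableEq ι]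
    [CommMonoid M] (f : ∀ i, β i → M) (y : ∀ i, β i) (l : ι) (a : β l) :
    ∏ j, f j (Function.update y l a j) = f l a * ∏ j ∈ univ.erase l, f j (y j) := by
  simp_rw [Function.apply_update f y l a]
  rw [prod_update_of_mem (mem_univ l), sdiff_singleton_eq_erase]

section SwapWithCoord

variable {X ι : Type*} [MeasurableSpace X]

def piOptionMeasurableEquiv : (Option ι → X) ≃ᵐ X × (ι → X) :=
  (MeasurableEquiv.piOptionEquivProd fun _ => X).trans MeasurableEquiv.prodComm

theorem piOptionMeasurableEquiv_apply (f : Option ι → X) :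
    piOptionMeasurableEquiv f = (f none, fun i => f (some i)) := rfl

theorem piOptionMeasurableEquiv_symm_apply (z : X × (ι → X)) (o : Option ι) :
    piOptionMeasurableEquiv.symm z o = o.elim z.1 z.2 := by
  cases o <;> rfl

theorem measurePreserving_piOptionMeasurableEquiv [Fintype ι] (μ : Measure X) [SigmaFinite μ] :
    MeasurePreserving (piOptionMeasurableEquiv (X := X) (ι := ι)) (Measure.pi fun _ => μ)
      (μ.prod (Measure.pi fun _ => μ)) :=
  Measure.measurePreserving_swap.comp
    (MeasurePreserving.symm _ ⟨MeasurableEquiv.measurable _,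
      Measure.pi_map_piOptionEquivProd fun _ => μ⟩)

variable [DecidableEq ι]

def swapWithCoord (l : ι) (z : X × (ι → X)) : X × (ι → X) :=
  (z.2 l, Function.update z.2 l z.1)

/-- On `Option ι → X`, exchanging `x` with `y l` is the transposition of `none` and `some l`. -/
theorem swapWithCoord_eq (l : ι) :
    swapWithCoord (X := X) l = piOptionMeasurableEquiv ∘
      MeasurableEquiv.piCongrLeft (fun _ => X) (Equiv.swap none (some l)) ∘
        piOptionMeasurableEquiv.symm := by
  ext z i <;>
  simp only [Function.comp_apply, MeasurableEquiv.coe_piCongrLeft, piOptionMeasurableEquiv_apply,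
      Equiv.piCongrLeft_apply_eq_cast, cast_eq, piOptionMeasurableEquiv_symm_apply]
  · rfl
  · show Function.update z.2 l z.1 i = ((Equiv.swap none (some l)) (some i)).elim z.1 z.2
    rcases eq_or_ne i l with rfl | hi
    · simp
    · rw [Equiv.swap_apply_of_ne_of_ne (by simp) (by simpa using hi), Function.update_of_ne hi]
      rfl

theorem measurableEmbedding_swapWithCoord (l : ι) :
    MeasurableEmbedding (swapWithCoord (X := X) l) := by
  rw [swapWithCoord_eq]
  exact piOptionMeasurableEquiv.measurableEmbedding.comp
    ((MeasurableEquiv.measurableEmbedding _).comp piOptionMeasurableEquiv.symm.measurableEmbedding)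

variable [Fintype ι] {μ : Measure X} [SigmaFinite μ]

theorem measurePreserving_swapWithCoord (l : ι) :
    MeasurePreserving (swapWithCoord l) (μ.prod (Measure.pi fun _ => μ))
      (μ.prod (Measure.pi fun _ => μ)) := by
  have hΦ := measurePreserving_piOptionMeasurableEquiv (ι := ι) μ
  rw [swapWithCoord_eq]
  exact hΦ.comp ((measurePreserving_piCongrLeft (fun _ => μ) _).comp hΦ.symm)

variable {E : Type*} [NormedAddCommGroup E] [NormedSpace ℝ E]
  {F : X × (ι → X) → E} (hF : Integrable F (μ.prod (Measure.pi fun _ => μ))) (l : ι)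
include hF

theorem integrable_integral_swapWithCoord_sub :
    Integrable (fun x => ∫ y, F (swapWithCoord l (x, y)) ∂Measure.pi (fun _ => μ) -
      ∫ y, F (x, y) ∂Measure.pi (fun _ => μ)) μ :=
  (((measurePreserving_swapWithCoord l).integrable_comp_of_integrable hF).integral_prod_left).sub
    hF.integral_prod_left

theorem integral_integral_swapWithCoord_sub :
    ∫ x, (∫ y, F (swapWithCoord l (x, y)) ∂Measure.pi (fun _ => μ) -
      ∫ y, F (x, y) ∂Measure.pi (fun _ => μ)) ∂μ = 0 := by
  have hFσ : Integrable (fun z => F (swapWithCoord l z)) (μ.prod (Measure.pi fun _ => μ)) :=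
    (measurePreserving_swapWithCoord l).integrable_comp_of_integrable hF
  rw [integral_sub hFσ.integral_prod_left hF.integral_prod_left, sub_eq_zero,
    integral_integral (f := fun x y => F (swapWithCoord l (x, y))) hFσ,
    integral_integral (f := fun x y => F (x, y)) hF]
  exact (measurePreserving_swapWithCoord l).integral_comp (measurableEmbedding_swapWithCoord l) F

end SwapWithCoord

section Integrand

variable {n m : ℕ} {α : ℝ} {g : En n → ℝ} {h : Fin m → En n → ℝ}

def mfiIntegrand (n m : ℕ) (α : ℝ) (g : En n → ℝ) (h : Fin m → En n → ℝ)
    (z : En n × (Fin m → En n)) : ℝ :=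
  g z.1 * (∏ j, h j (z.2 j)) / (∑ j, dist z.1 (z.2 j)) ^ ((m * n : ℝ) - α)

theorem measurable_mfiIntegrand (hg : Measurable g) (hh : ∀ i, Measurable (h i)) :
    Measurable (mfiIntegrand n m α g h) := by
  unfold mfiIntegrand
  fun_prop

theorem integrable_mfiIntegrand (hg : Measurable g) (hh : ∀ i, Measurable (h i))
    (hint : (∫⁻ x, ∫⁻ y : Fin m → En n,
        ENNReal.ofReal (|g x| * (∏ j, |h j (y j)|) /
          (∑ j, dist x (y j)) ^ ((m * n : ℝ) - α))) < ⊤) :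
    Integrable (mfiIntegrand n m α g h) := by
  have hF := measurable_mfiIntegrand (α := α) hg hh
  refine ⟨hF.aestronglyMeasurable, ?_⟩
  rw [hasFiniteIntegral_iff_norm, Measure.volume_eq_prod,
    lintegral_prod _ hF.norm.ennreal_ofReal.aemeasurable]
  refine (lintegral_congr fun x => lintegral_congr fun y => ?_).trans_lt hint
  rw [mfiIntegrand, Real.norm_eq_abs, abs_div, abs_mul, Finset.abs_prod,
    abs_of_nonneg (Real.rpow_nonneg (Finset.sum_nonneg fun j _ => dist_nonneg) _)]

theorem mul_mfi_eq_integral_mfiIntegrand (x : En n) :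
    g x * mfi n m α h x = ∫ y, mfiIntegrand n m α g h (x, y) := by
  rw [mfi, ← integral_const_mul]
  simp only [mfiIntegrand, mul_div_assoc]

theorem mul_mfiAdj_update_eq_integral_mfiIntegrand_swapWithCoord (l : Fin m) (x : En n) :
    h l x * mfiAdj n m α l (Function.update h l g) x =
      ∫ y, mfiIntegrand n m α g h (swapWithCoord l (x, y)) := by
  rw [mfiAdj, ← integral_const_mul]
  congr 1 with y
  have hprod : ∏ j, Function.update h l g j (y j) =
      g (y l) * ∏ j ∈ Finset.univ.erase l, h j (y j) :=
    Fintype.prod_apply_update (fun j (φ : En n → ℝ) => φ (y j)) h l g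
  rw [mfiIntegrand, swapWithCoord, hprod, Fintype.prod_apply_update (fun j => h j),
    Fintype.sum_apply_update (fun _ => dist (y l))]
  ring

theorem piOp_eq_integral_sub_integral (l : Fin m) (x : En n) :
    PiOp n m α l g h x = (∫ y, mfiIntegrand n m α g h (swapWithCoord l (x, y))) -
      ∫ y, mfiIntegrand n m α g h (x, y) := by
  rw [PiOp, mul_mfiAdj_update_eq_integral_mfiIntegrand_swapWithCoord,
    mul_mfi_eq_integral_mfiIntegrand]

end Integrand

theorem piOp_integrable_integral_zero_general (n m : ℕ) (l : Fin m) (α : ℝ)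
    (g : En n → ℝ) (h : Fin m → En n → ℝ)
    (hg : Measurable g) (hh : ∀ i, Measurable (h i))
    (hint : (∫⁻ x, ∫⁻ y : Fin m → En n,
        ENNReal.ofReal (|g x| * (∏ j, |h j (y j)|) /
          (∑ j, dist x (y j)) ^ ((m * n : ℝ) - α))) < ⊤) :
    Integrable (PiOp n m α l g h) volume ∧ (∫ x, PiOp n m α l g h x) = 0 := by
  have hF := integrable_mfiIntegrand hg hh hint
  rw [funext (piOp_eq_integral_sub_integral l)]
  exact ⟨integrable_integral_swapWithCoord_sub hF l, integral_integral_swapWithCoord_sub hF l⟩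

/-- Under a joint integrability condition, `Π_l(g, h₁, …, h_m)` is integrable
and has vanishing integral. -/
theorem piOp_integrable_integral_zero (n m : ℕ) (hn : 1 ≤ n) (hm : 1 ≤ m) (l : Fin m)
    (α : ℝ) (hα0 : 0 < α) (hα1 : α < m * n)
    (g : En n → ℝ) (h : Fin m → En n → ℝ)
    (hg : Measurable g) (hh : ∀ i, Measurable (h i))
    (hint : (∫⁻ x, ∫⁻ y : Fin m → En n,
        ENNReal.ofReal (|g x| * (∏ j, |h j (y j)|) /
          (∑ j, dist x (y j)) ^ ((m * n : ℝ) - α))) < ⊤) :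
    Integrable (PiOp n m α l g h) volume ∧ (∫ x, PiOp n m α l g h x) = 0 :=
  piOp_integrable_integral_zero_general n m l α g h hg hh hint
end
end

section
/- Let n, m ≥ 1 be integers, 1 ≤ l ≤ m and 0 < α < mn, and write K(x, y_1,…,y_m) = (|x−y_1|+⋯+|x−y_m|)^{−(mn−α)}. Let b, g, h_1, …, h_m be measurable functions on ℝ^n such that each of the three iterated integrals ∫_{ℝ^n}∫_{(ℝ^n)^m} |g(x)| ∏_j |h_j(y_j)| K(x,y⃗) dy⃗ dx, ∫_{ℝ^n}∫_{(ℝ^n)^m} |b(x)| |g(x)| ∏_j |h_j(y_j)| K(x,y⃗) dy⃗ dx, and ∫_{ℝ^n}∫_{(ℝ^n)^m} |b(y_l)| |g(x)| ∏_j |h_j(y_j)| K(x,y⃗) dy⃗ dx is finite. Then b·Π_l(g, h_1, …, h_m) and g·[b,I_α]_l(h_1,…,h_m) belong to L^1(ℝ^n) and ∫_{ℝ^n} b(x) Π_l(g, h_1, …, h_m)(x) dx = ∫_{ℝ^n} g(x) [b,I_α]_l(h_1,…,h_m)(x) dx. -/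
open MeasureTheory ENNReal Filter Metric

noncomputable section

/-! ### Auxiliary material for the duality theorem -/

attribute [-instance] Fintype.subtypeEq Fintype.subtypeEq'

/-- Splitting off the `l`-th coordinate of a finite product. -/
def eSplit (n m : ℕ) (l : Fin m) :
    (Fin m → En n) ≃ᵐ En n × ({j : Fin m // ¬ j = l} → En n) :=
  (MeasurableEquiv.piEquivPiSubtypeProd (fun _ => En n) (fun j => j = l)).trans
    ((MeasurableEquiv.piUnique fun _ : {j : Fin m // j = l} => En n).prodCongr (.refl _))

theorem eSplit_mp (n m : ℕ) (l : Fin m) : MeasurePreserving (eSplit n m l) volume volume := by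
  have h1 := volume_preserving_piEquivPiSubtypeProd (fun _ : Fin m => En n) (fun j => j = l)
  have h2 := measurePreserving_piUnique (fun _ : {j : Fin m // j = l} => (volume : Measure (En n)))
  have h3 : MeasurePreserving
      (Prod.map (MeasurableEquiv.piUnique fun _ : {j : Fin m // j = l} => En n)
        (id : ({j : Fin m // ¬ j = l} → En n) → _))
      ((Measure.pi fun _ => volume).prod (Measure.pi fun _ => volume))
      (volume.prod (Measure.pi fun _ => volume)) :=
    h2.prod (MeasurePreserving.id _)
  refine h1.trans ?_
  have hv : (volume : Measure (En n × ({j : Fin m // ¬ j = l} → En n)))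
      = volume.prod (Measure.pi fun _ => volume) := by
    rw [Measure.volume_eq_prod, volume_pi]
  have hv2 : (volume : Measure (({j : Fin m // j = l} → En n) × ({j : Fin m // ¬ j = l} → En n)))
      = (Measure.pi fun _ => volume).prod (Measure.pi fun _ => volume) := by
    rw [Measure.volume_eq_prod, volume_pi, volume_pi]
  rw [hv, hv2]
  exact h3

theorem eSplit_apply (n m : ℕ) (l : Fin m) (y : Fin m → En n) :
    eSplit n m l y = (y l, fun j => y j.1) := rfl

theorem eSplit_symm_apply (n m : ℕ) (l : Fin m) (x : En n) (y : Fin m → En n) :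
    (eSplit n m l).symm (x, fun j => y j.1) = Function.update y l x := by
  have : eSplit n m l (Function.update y l x) = (x, fun j => y j.1) := by
    rw [eSplit_apply]
    refine Prod.ext (Function.update_self _ _ _) ?_
    funext j
    exact Function.update_of_ne j.2 _ _
  rw [← this, MeasurableEquiv.symm_apply_apply]

/-- The measurable equivalence swapping `x` with the `l`-th coordinate of `y`. -/
def Teq (n m : ℕ) (l : Fin m) :
    (En n × (Fin m → En n)) ≃ᵐ (En n × (Fin m → En n)) :=
  ((MeasurableEquiv.refl (En n)).prodCongr (eSplit n m l)).trans <|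
    (MeasurableEquiv.prodAssoc.symm).trans <|
      (MeasurableEquiv.prodComm.prodCongr (MeasurableEquiv.refl _)).trans <|
        MeasurableEquiv.prodAssoc.trans <|
          (MeasurableEquiv.refl (En n)).prodCongr (eSplit n m l).symm

theorem Teq_apply (n m : ℕ) (l : Fin m) (x : En n) (y : Fin m → En n) :
    Teq n m l (x, y) = (y l, Function.update y l x) := by
  show ((MeasurableEquiv.refl (En n)).prodCongr (eSplit n m l).symm)
      (MeasurableEquiv.prodAssoc
        ((MeasurableEquiv.prodComm.prodCongr (MeasurableEquiv.refl _))
          (MeasurableEquiv.prodAssoc.symm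
            (((MeasurableEquiv.refl (En n)).prodCongr (eSplit n m l)) (x, y))))) = _
  rw [show ((MeasurableEquiv.refl (En n)).prodCongr (eSplit n m l)) (x, y)
      = (x, (y l, fun j => y j.1)) from rfl]
  show (y l, (eSplit n m l).symm (x, fun j => y j.1)) = _
  rw [eSplit_symm_apply]

theorem Teq_mp (n m : ℕ) (l : Fin m) : MeasurePreserving (Teq n m l) volume volume := by
  have hE := eSplit_mp n m l
  have h1 : MeasurePreserving ((MeasurableEquiv.refl (En n)).prodCongr (eSplit n m l))
      volume volume := by
    rw [Measure.volume_eq_prod, Measure.volume_eq_prod]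
    exact (MeasurePreserving.id _).prod hE
  have h5 : MeasurePreserving ((MeasurableEquiv.refl (En n)).prodCongr (eSplit n m l).symm)
      volume volume := by
    rw [Measure.volume_eq_prod, Measure.volume_eq_prod]
    exact (MeasurePreserving.id _).prod hE.symm
  have h2 : MeasurePreserving
      (MeasurableEquiv.prodAssoc.symm :
        En n × (En n × ({j : Fin m // ¬ j = l} → En n)) ≃ᵐ _) volume volume := by
    rw [Measure.volume_eq_prod, Measure.volume_eq_prod]
    exact (measurePreserving_prodAssoc _ _ _).symm
  have h3 : MeasurePreserving
      (MeasurableEquiv.prodComm.prodCongr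
        (MeasurableEquiv.refl ({j : Fin m // ¬ j = l} → En n)) :
        ((En n × En n) × _) ≃ᵐ ((En n × En n) × _)) volume volume := by
    rw [Measure.volume_eq_prod, Measure.volume_eq_prod]
    exact (MeasureTheory.Measure.measurePreserving_swap).prod (MeasurePreserving.id _)
  have h4 : MeasurePreserving
      (MeasurableEquiv.prodAssoc :
        ((En n × En n) × ({j : Fin m // ¬ j = l} → En n)) ≃ᵐ _) volume volume := by
    rw [Measure.volume_eq_prod, Measure.volume_eq_prod]
    exact measurePreserving_prodAssoc _ _ _
  exact h1.trans <| h2.trans <| h3.trans <| h4.trans h5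

theorem aux_integrable {n m : ℕ} {F : En n × (Fin m → En n) → ℝ} (hF : Measurable F)
    (hfin : (∫⁻ x, ∫⁻ y : Fin m → En n, ENNReal.ofReal |F (x, y)|) < ⊤) :
    Integrable F volume := by
  refine ⟨hF.aestronglyMeasurable, ?_⟩
  rw [hasFiniteIntegral_iff_norm]
  simp_rw [Real.norm_eq_abs]
  rw [Measure.volume_eq_prod, lintegral_prod _ hF.abs.ennreal_ofReal.aemeasurable]
  exact hfin

/-- Duality between the multiplication operator `Π_l` and the commutator
`[b, I_α]_l`: `∫ b · Π_l(g, h⃗) = ∫ g · [b, I_α]_l(h⃗)`. -/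
theorem piOp_commutator_duality (n m : ℕ) (hn : 1 ≤ n) (hm : 1 ≤ m) (l : Fin m)
    (α : ℝ) (hα0 : 0 < α) (hα1 : α < m * n)
    (b g : En n → ℝ) (h : Fin m → En n → ℝ)
    (hb : Measurable b) (hg : Measurable g) (hh : ∀ i, Measurable (h i))
    (hint1 : (∫⁻ x, ∫⁻ y : Fin m → En n,
        ENNReal.ofReal (|g x| * (∏ j, |h j (y j)|) /
          (∑ j, dist x (y j)) ^ ((m * n : ℝ) - α))) < ⊤)
    (hint2 : (∫⁻ x, ∫⁻ y : Fin m → En n,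
        ENNReal.ofReal (|b x| * |g x| * (∏ j, |h j (y j)|) /
          (∑ j, dist x (y j)) ^ ((m * n : ℝ) - α))) < ⊤)
    (hint3 : (∫⁻ x, ∫⁻ y : Fin m → En n,
        ENNReal.ofReal (|b (y l)| * |g x| * (∏ j, |h j (y j)|) /
          (∑ j, dist x (y j)) ^ ((m * n : ℝ) - α))) < ⊤) :
    Integrable (fun x => b x * PiOp n m α l g h x) volume ∧
    Integrable (fun x => g x * commOp n m α l b h x) volume ∧
    (∫ x, b x * PiOp n m α l g h x) = ∫ x, g x * commOp n m α l b h x := by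
  classical
  set s : ℝ := (m * n : ℝ) - α with hs
  have hKnn : ∀ (x : En n) (y : Fin m → En n), 0 ≤ (∑ j, dist x (y j)) ^ s :=
    fun x y => Real.rpow_nonneg (Finset.sum_nonneg fun j _ => dist_nonneg) _
  have hPmeas : Measurable fun y : Fin m → En n => ∏ j, h j (y j) :=
    Finset.measurable_prod _ fun j _ => (hh j).comp (measurable_pi_apply j)
  have hker : Measurable fun p : En n × (Fin m → En n) => (∑ j, dist p.1 (p.2 j)) ^ s := by
    fun_prop
  set ΦA : En n × (Fin m → En n) → ℝ :=
    fun p => b p.1 * g p.1 * ((∏ j, h j (p.2 j)) / (∑ j, dist p.1 (p.2 j)) ^ s) with hΦA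
  set ΦB : En n × (Fin m → En n) → ℝ :=
    fun p => g p.1 * (b (p.2 l) * (∏ j, h j (p.2 j)) / (∑ j, dist p.1 (p.2 j)) ^ s) with hΦB
  set ΦC : En n × (Fin m → En n) → ℝ := fun p => ΦB (Teq n m l p) with hΦC
  have hAmeas : Measurable ΦA := by
    rw [hΦA]
    exact ((hb.comp measurable_fst).mul (hg.comp measurable_fst)).mul
      ((hPmeas.comp measurable_snd).div hker)
  have hBmeas : Measurable ΦB := by
    rw [hΦB]
    exact (hg.comp measurable_fst).mul
      (((hb.comp ((measurable_pi_apply l).comp measurable_snd)).mul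
        (hPmeas.comp measurable_snd)).div hker)
  have hA : Integrable ΦA volume := by
    refine aux_integrable hAmeas ?_
    have heq : (∫⁻ x, ∫⁻ y : Fin m → En n, ENNReal.ofReal |ΦA (x, y)|)
        = ∫⁻ x, ∫⁻ y : Fin m → En n,
            ENNReal.ofReal (|b x| * |g x| * (∏ j, |h j (y j)|) /
              (∑ j, dist x (y j)) ^ s) := by
      refine lintegral_congr fun x => lintegral_congr fun y => ?_
      congr 1
      simp only [hΦA]
      rw [abs_mul, abs_mul, abs_div, Finset.abs_prod, abs_of_nonneg (hKnn x y)]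
      ring
    rw [heq]
    exact hint2
  have hB : Integrable ΦB volume := by
    refine aux_integrable hBmeas ?_
    have heq : (∫⁻ x, ∫⁻ y : Fin m → En n, ENNReal.ofReal |ΦB (x, y)|)
        = ∫⁻ x, ∫⁻ y : Fin m → En n,
            ENNReal.ofReal (|b (y l)| * |g x| * (∏ j, |h j (y j)|) /
              (∑ j, dist x (y j)) ^ s) := by
      refine lintegral_congr fun x => lintegral_congr fun y => ?_
      congr 1
      simp only [hΦB]
      rw [abs_mul, abs_div, abs_mul, Finset.abs_prod, abs_of_nonneg (hKnn x y)]
      ring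
    rw [heq]
    exact hint3
  have hC : Integrable ΦC volume := by
    rw [hΦC]
    exact ((Teq_mp n m l).integrable_comp_emb (Teq n m l).measurableEmbedding).mpr hB
  have hAp : Integrable ΦA ((volume : Measure (En n)).prod volume) := by
    rw [← Measure.volume_eq_prod]; exact hA
  have hBp : Integrable ΦB ((volume : Measure (En n)).prod volume) := by
    rw [← Measure.volume_eq_prod]; exact hB
  have hCp : Integrable ΦC ((volume : Measure (En n)).prod volume) := by
    rw [← Measure.volume_eq_prod]; exact hC
  have hmA : Integrable (fun x => ∫ y, ΦA (x, y)) volume := hAp.integral_prod_left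
  have hmB : Integrable (fun x => ∫ y, ΦB (x, y)) volume := hBp.integral_prod_left
  have hmC : Integrable (fun x => ∫ y, ΦC (x, y)) volume := hCp.integral_prod_left
  have hprodU : ∀ (F : En n → ℝ) (y : Fin m → En n),
      (∏ j, Function.update h l F j (y j))
        = F (y l) * ∏ j ∈ Finset.univ.erase l, h j (y j) := by
    intro F y
    rw [← Finset.mul_prod_erase Finset.univ (fun j => Function.update h l F j (y j))
      (Finset.mem_univ l), Function.update_self]
    congr 1
    exact Finset.prod_congr rfl fun j hj => by
      rw [Function.update_of_ne (Finset.ne_of_mem_erase hj)]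
  have hprodh : ∀ y : Fin m → En n,
      (∏ j, h j (y j)) = h l (y l) * ∏ j ∈ Finset.univ.erase l, h j (y j) :=
    fun y => (Finset.mul_prod_erase Finset.univ (fun j => h j (y j)) (Finset.mem_univ l)).symm
  have hmAeq : ∀ x, (∫ y, ΦA (x, y)) = b x * g x * mfi n m α h x := by
    intro x
    simp only [hΦA]
    rw [mfi, ← hs, integral_const_mul]
  have hmBeq : ∀ x, (∫ y, ΦB (x, y))
      = g x * mfi n m α (Function.update h l (fun t => b t * h l t)) x := by
    intro x
    simp only [hΦB]
    rw [mfi, ← hs, integral_const_mul]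
    congr 1
    refine integral_congr_ae (Eventually.of_forall fun y => ?_)
    dsimp only
    rw [hprodU (fun t => b t * h l t) y, hprodh y]
    ring
  have hmCeq : ∀ x, (∫ y, ΦC (x, y))
      = b x * h l x * mfiAdj n m α l (Function.update h l g) x := by
    intro x
    rw [mfiAdj, ← hs, ← integral_const_mul]
    refine integral_congr_ae (Eventually.of_forall fun y => ?_)
    dsimp only
    simp only [hΦC, hΦB]
    rw [Teq_apply]
    have e2 : (∏ j, h j (Function.update y l x j))
        = h l x * ∏ j ∈ Finset.univ.erase l, h j (y j) := by
      rw [← Finset.mul_prod_erase Finset.univ (fun j => h j (Function.update y l x j))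
        (Finset.mem_univ l), Function.update_self]
      congr 1
      exact Finset.prod_congr rfl fun j hj => by
        rw [Function.update_of_ne (Finset.ne_of_mem_erase hj)]
    have e3 : (∑ j, dist (y l) (Function.update y l x j))
        = dist (y l) x + ∑ j ∈ Finset.univ.erase l, dist (y l) (y j) := by
      rw [← Finset.add_sum_erase Finset.univ (fun j => dist (y l) (Function.update y l x j))
        (Finset.mem_univ l), Function.update_self]
      congr 1
      exact Finset.sum_congr rfl fun j hj => by
        rw [Function.update_of_ne (Finset.ne_of_mem_erase hj)]
    simp only [e2, e3, Function.update_self, hprodU g y]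
    ring
  have key1 : ∀ x, b x * PiOp n m α l g h x = (∫ y, ΦC (x, y)) - ∫ y, ΦA (x, y) := by
    intro x
    rw [PiOp, hmCeq x, hmAeq x]
    ring
  have key2 : ∀ x, g x * commOp n m α l b h x = (∫ y, ΦB (x, y)) - ∫ y, ΦA (x, y) := by
    intro x
    rw [commOp, hmBeq x, hmAeq x]
    ring
  have hswap : (∫ z, ΦC (z.1, z.2) ∂((volume : Measure (En n)).prod volume))
      = ∫ z, ΦB (z.1, z.2) ∂((volume : Measure (En n)).prod volume) := by
    rw [← Measure.volume_eq_prod]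
    simp only [hΦC]
    exact (Teq_mp n m l).integral_comp (Teq n m l).measurableEmbedding ΦB
  refine ⟨(hmC.sub hmA).congr (Eventually.of_forall fun x => (key1 x).symm),
    (hmB.sub hmA).congr (Eventually.of_forall fun x => (key2 x).symm), ?_⟩
  calc (∫ x, b x * PiOp n m α l g h x)
      = ∫ x, ((∫ y, ΦC (x, y)) - ∫ y, ΦA (x, y)) :=
        integral_congr_ae (Eventually.of_forall key1)
    _ = (∫ x, ∫ y, ΦC (x, y)) - ∫ x, ∫ y, ΦA (x, y) := integral_sub hmC hmA
    _ = (∫ z, ΦC (z.1, z.2) ∂((volume : Measure (En n)).prod volume))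
          - ∫ z, ΦA (z.1, z.2) ∂((volume : Measure (En n)).prod volume) := by
        rw [integral_integral hCp, integral_integral hAp]
    _ = (∫ z, ΦB (z.1, z.2) ∂((volume : Measure (En n)).prod volume))
          - ∫ z, ΦA (z.1, z.2) ∂((volume : Measure (En n)).prod volume) := by
        rw [hswap]
    _ = (∫ x, ∫ y, ΦB (x, y)) - ∫ x, ∫ y, ΦA (x, y) := by
        rw [integral_integral hBp, integral_integral hAp]
    _ = ∫ x, ((∫ y, ΦB (x, y)) - ∫ y, ΦA (x, y)) := (integral_sub hmB hmA).symm
    _ = ∫ x, g x * commOp n m α l b h x :=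
        (integral_congr_ae (Eventually.of_forall key2)).symm
end
end

section
/- Let n, m ≥ 1 be integers and 0 < α < mn. Then for all x, x', y_1, …, y_m ∈ ℝ^n such that S := ∑_{j=1}^m |x − y_j| > 0 and 2m|x − x'| ≤ S, one has |(∑_{j=1}^m |x − y_j|)^{α−mn} − (∑_{j=1}^m |x' − y_j|)^{α−mn}| ≤ m (mn − α) 2^{mn − α + 1} |x − x'| S^{α − mn − 1}. -/
open MeasureTheory ENNReal Filter Metric

noncomputable section

lemma rpow_mvt_aux {β : ℝ} (hβ : β < 0) {a b : ℝ} (ha : 0 < a) (hab : a ≤ b) :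
    |a ^ β - b ^ β| ≤ (-β) * a ^ (β - 1) * (b - a) := by
  rcases eq_or_lt_of_le hab with rfl | hlt
  · simp
  · have hcont : ContinuousOn (fun t : ℝ => t ^ β) (Set.Icc a b) := by
      apply ContinuousOn.rpow_const continuousOn_id
      intro t ht
      exact Or.inl (ne_of_gt (lt_of_lt_of_le ha ht.1))
    have hderiv : ∀ t ∈ Set.Ioo a b,
        HasDerivAt (fun t : ℝ => t ^ β) (β * t ^ (β - 1)) t := by
      intro t ht
      exact Real.hasDerivAt_rpow_const (Or.inl (ne_of_gt (lt_trans ha ht.1)))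
    obtain ⟨c, hc, hceq⟩ := exists_hasDerivAt_eq_slope (fun t : ℝ => t ^ β)
      (fun t => β * t ^ (β - 1)) hlt hcont hderiv
    have hba : (0:ℝ) < b - a := by linarith
    have heq : a ^ β - b ^ β = (-β) * c ^ (β - 1) * (b - a) := by
      field_simp at hceq
      nlinarith [hceq]
    have hc1 : c ^ (β - 1) ≤ a ^ (β - 1) :=
      Real.rpow_le_rpow_of_nonpos ha (le_of_lt hc.1) (by linarith)
    have hcpos : (0:ℝ) < c ^ (β - 1) := Real.rpow_pos_of_pos (lt_trans ha hc.1) _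
    have hnb : (0:ℝ) < -β := by linarith
    rw [heq, abs_of_nonneg (mul_nonneg (mul_nonneg hnb.le hcpos.le) hba.le)]
    exact mul_le_mul_of_nonneg_right (mul_le_mul_of_nonneg_left hc1 hnb.le) hba.le
/-- Smoothness estimate for the kernel `(∑ |x - y_j|)^{α - mn}`. -/
theorem kernel_smoothness (n m : ℕ) (hn : 1 ≤ n) (hm : 1 ≤ m) (α : ℝ)
    (hα0 : 0 < α) (hα1 : α < m * n)
    (x x' : En n) (y : Fin m → En n)
    (hS : 0 < ∑ j, dist x (y j))
    (hnear : 2 * m * dist x x' ≤ ∑ j, dist x (y j)) :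
    |(∑ j, dist x (y j)) ^ (α - m * n) - (∑ j, dist x' (y j)) ^ (α - m * n)| ≤
      m * (m * n - α) * 2 ^ ((m * n : ℝ) - α + 1) * dist x x' *
        (∑ j, dist x (y j)) ^ (α - m * n - 1) := by
  set S := ∑ j, dist x (y j) with hSdef
  set S' := ∑ j, dist x' (y j) with hS'def
  set d := dist x x' with hd
  have hd0 : 0 ≤ d := dist_nonneg
  have hdiff : |S - S'| ≤ m * d := by
    have : S - S' = ∑ j, (dist x (y j) - dist x' (y j)) := by
      rw [hSdef, hS'def, Finset.sum_sub_distrib]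
    rw [this]
    calc |∑ j, (dist x (y j) - dist x' (y j))|
        ≤ ∑ j, |dist x (y j) - dist x' (y j)| := Finset.abs_sum_le_sum_abs _ _
      _ ≤ ∑ _j : Fin m, d := Finset.sum_le_sum fun j _ => abs_dist_sub_le _ _ _
      _ = m * d := by simp [mul_comm]
  have hmd : 2 * (m * d) ≤ S := by
    rw [hd]; rw [← mul_assoc]; exact hnear
  have hS'ge : S / 2 ≤ S' := by
    have := abs_le.1 hdiff
    linarith [this.1, this.2]
  have hS2 : (0:ℝ) < S / 2 := by linarith
  set a := min S S' with hadef
  set b := max S S' with hbdef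
  have ha : 0 < a := lt_min hS (lt_of_lt_of_le hS2 hS'ge)
  have haS2 : S / 2 ≤ a := le_min (by linarith) hS'ge
  have hab : a ≤ b := min_le_max
  have hba : b - a = |S - S'| := by
    rw [hadef, hbdef]
    rcases le_total S S' with h | h
    · rw [min_eq_left h, max_eq_right h, abs_of_nonpos (by linarith)]; ring
    · rw [min_eq_right h, max_eq_left h, abs_of_nonneg (by linarith)]
  set β := α - (m:ℝ) * n with hβdef
  have hβ : β < 0 := by rw [hβdef]; linarith
  have key : |a ^ β - b ^ β| ≤ (-β) * a ^ (β - 1) * (b - a) := rpow_mvt_aux hβ ha hab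
  have habs : |S ^ β - S' ^ β| = |a ^ β - b ^ β| := by
    rw [hadef, hbdef]
    rcases le_total S S' with h | h
    · rw [min_eq_left h, max_eq_right h]
    · rw [min_eq_right h, max_eq_left h, abs_sub_comm]
  have hpow : a ^ (β - 1) ≤ (S / 2) ^ (β - 1) :=
    Real.rpow_le_rpow_of_nonpos hS2 haS2 (by linarith)
  have hSdiv : (S / 2) ^ (β - 1) = S ^ (β - 1) * 2 ^ ((m:ℝ) * n - α + 1) := by
    rw [Real.div_rpow (le_of_lt hS) (by norm_num : (0:ℝ) ≤ 2), div_eq_mul_inv,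
      ← Real.rpow_neg (by norm_num : (0:ℝ) ≤ 2)]
    congr 1
    rw [hβdef]; ring
  have hApos : 0 < a ^ (β - 1) := Real.rpow_pos_of_pos ha _
  have hSpos : 0 < S ^ (β - 1) := Real.rpow_pos_of_pos hS _
  have h2pos : (0:ℝ) < 2 ^ ((m:ℝ) * n - α + 1) := Real.rpow_pos_of_pos (by norm_num) _
  have hnb : (0:ℝ) < -β := by linarith
  calc |S ^ β - S' ^ β| = |a ^ β - b ^ β| := habs
    _ ≤ (-β) * a ^ (β - 1) * (b - a) := key
    _ ≤ (-β) * ((S / 2) ^ (β - 1)) * (m * d) := by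
        have h1 : b - a ≤ m * d := hba ▸ hdiff
        have h2 : (0:ℝ) ≤ b - a := by linarith
        exact mul_le_mul (mul_le_mul_of_nonneg_left hpow hnb.le) h1 h2
          (mul_nonneg hnb.le (Real.rpow_pos_of_pos hS2 _).le)
    _ = m * ((m:ℝ) * n - α) * 2 ^ ((m:ℝ) * n - α + 1) * d * S ^ (β - 1) := by
        rw [hSdiv, hβdef]; ring
    _ = m * ((m:ℝ) * n - α) * 2 ^ ((m:ℝ) * n - α + 1) * d * S ^ (α - (m:ℝ) * n - 1) := by
        rw [hβdef]
end
end

section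
/- Let n, m ≥ 1 be integers and 0 < α < mn. There exists a constant C, depending only on m, n and α, with the following property. Let r > 0, M ≥ 8m, x_0, y_1, …, y_m ∈ ℝ^n, and suppose that |x_0 − y_{j_0}| ≥ M r for at least one index j_0. If f_1, …, f_m are nonnegative measurable functions on ℝ^n with f_j supported in B(y_j, r) for each j, then for all x, x' ∈ B(x_0, r): |I_α(f_1,…,f_m)(x) − I_α(f_1,…,f_m)(x')| ≤ C |x − x'| (M r)^{α − mn − 1} ∏_{j=1}^m ∫_{ℝ^n} f_j(y) dy. -/
open MeasureTheory ENNReal Filter Metric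

noncomputable section

/-!
Write `I_α(f)(u) = ∫ P(z) K(u, z) dz` with `P(z) = ∏ f_j(z_j)` and
`K(u, z) = (∑ |u - z_j|)^(α - mn)`. On the support of `P` every `z_j` lies in `B(y_j, r)`, so
for `u ∈ B(x₀, r)` the far index `j₀` forces `∑ |u - z_j| ≥ M r / 2`. The map `t ↦ t^(α - mn)` is
Lipschitz on `[M r / 2, ∞)` with constant `(mn - α) (M r / 2)^(α - mn - 1)`, and `u ↦ ∑ |u - z_j|`
is `m`-Lipschitz; integrating against `P` and using Fubini for `∫ P` gives the bound.
-/

lemma abs_rpow_sub_rpow_le_of_nonpos {s c a b : ℝ} (hs : s ≤ 0) (hc : 0 < c) (ha : c ≤ a)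
    (hb : c ≤ b) : |a ^ s - b ^ s| ≤ -s * c ^ (s - 1) * |a - b| := by
  have hderiv : ∀ t ∈ Set.Ici c, HasDerivWithinAt (· ^ s) (s * t ^ (s - 1)) (Set.Ici c) t :=
    fun t ht => (Real.hasDerivAt_rpow_const (Or.inl (hc.trans_le ht).ne')).hasDerivWithinAt
  have hbound : ∀ t ∈ Set.Ici c, ‖s * t ^ (s - 1)‖ ≤ -s * c ^ (s - 1) := fun t ht => by
    have ht0 : 0 < t := hc.trans_le ht
    rw [Real.norm_eq_abs, abs_mul, abs_of_nonpos hs, abs_of_pos (Real.rpow_pos_of_pos ht0 _)]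
    exact mul_le_mul_of_nonneg_left (Real.rpow_le_rpow_of_nonpos hc ht (by linarith))
      (neg_nonneg.mpr hs)
  simpa [Real.norm_eq_abs] using
    (convex_Ici c).norm_image_sub_le_of_norm_hasDerivWithin_le hderiv hbound hb ha

lemma abs_sum_dist_sub_sum_dist_le {ι X : Type*} [Fintype ι] [PseudoMetricSpace X]
    (x x' : X) (z : ι → X) :
    |∑ j, dist x (z j) - ∑ j, dist x' (z j)| ≤ Fintype.card ι * dist x x' := by
  rw [← Finset.sum_sub_distrib]
  calc |∑ j, (dist x (z j) - dist x' (z j))|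
      ≤ ∑ j, |dist x (z j) - dist x' (z j)| := Finset.abs_sum_le_sum_abs _ _
    _ ≤ ∑ _j : ι, dist x x' := Finset.sum_le_sum fun j _ => abs_dist_sub_le _ _ _
    _ = Fintype.card ι * dist x x' := by simp

section FarPoints

variable {ι X : Type*} [Fintype ι] [PseudoMetricSpace X] {x₀ u x x' : X} {y z : ι → X}
  {r R s : ℝ} {j₀ : ι}

lemma sum_dist_bounds_of_far (hR : 4 * r ≤ R) (hfar : R ≤ dist x₀ (y j₀))
    (hu : u ∈ ball x₀ r) (hz : ∀ j, z j ∈ ball (y j) r) :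
    R / 2 ≤ ∑ j, dist u (z j) ∧ ∑ j, dist u (z j) ≤ ∑ j, (dist u (y j) + r) := by
  refine ⟨?_, Finset.sum_le_sum fun j _ => ?_⟩
  · have hz₀ := mem_ball.mp (hz j₀)
    have hu₀ := mem_ball'.mp hu
    have := dist_triangle4 x₀ u (z j₀) (y j₀)
    have := Finset.single_le_sum (fun j _ => dist_nonneg (x := u) (y := z j))
      (Finset.mem_univ j₀)
    linarith
  · linarith [dist_triangle u (y j) (z j), mem_ball'.mp (hz j)]

lemma rpow_sum_dist_bounds_of_far (hs : s ≤ 0) (hR : 4 * r ≤ R) (hfar : R ≤ dist x₀ (y j₀))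
    (hu : u ∈ ball x₀ r) (hz : ∀ j, z j ∈ ball (y j) r) :
    (∑ j, (dist u (y j) + r)) ^ s ≤ (∑ j, dist u (z j)) ^ s ∧
      (∑ j, dist u (z j)) ^ s ≤ (R / 2) ^ s := by
  have hr := pos_of_mem_ball hu
  obtain ⟨hlow, hup⟩ := sum_dist_bounds_of_far hR hfar hu hz
  exact ⟨Real.rpow_le_rpow_of_nonpos (by linarith) hup hs,
    Real.rpow_le_rpow_of_nonpos (by linarith) hlow hs⟩

lemma abs_rpow_sum_dist_sub_le_of_far (hs : s ≤ 0) (hR : 4 * r ≤ R)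
    (hfar : R ≤ dist x₀ (y j₀)) (hx : x ∈ ball x₀ r) (hx' : x' ∈ ball x₀ r)
    (hz : ∀ j, z j ∈ ball (y j) r) :
    |(∑ j, dist x (z j)) ^ s - (∑ j, dist x' (z j)) ^ s| ≤
      -s * (R / 2) ^ (s - 1) * (Fintype.card ι * dist x x') := by
  have hr := pos_of_mem_ball hx
  obtain ⟨hlow, -⟩ := sum_dist_bounds_of_far hR hfar hx hz
  obtain ⟨hlow', -⟩ := sum_dist_bounds_of_far hR hfar hx' hz
  refine (abs_rpow_sub_rpow_le_of_nonpos hs (by linarith) hlow hlow').trans ?_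
  exact mul_le_mul_of_nonneg_left (abs_sum_dist_sub_sum_dist_le x x' z)
    (mul_nonneg (by linarith) (Real.rpow_nonneg (by linarith) _))

end FarPoints

section BoundedKernel

variable {X : Type*} [MeasurableSpace X] {μ : Measure X} {P K K' : X → ℝ} {a a' b : ℝ}

lemma integrable_mul_iff_of_bounds (hP : 0 ≤ P) (hPm : AEStronglyMeasurable P μ)
    (hKm : AEStronglyMeasurable K μ) (ha : 0 < a) (hK : ∀ z, P z ≠ 0 → a ≤ K z ∧ K z ≤ b) :
    Integrable (fun z => P z * K z) μ ↔ Integrable P μ := by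
  constructor
  · refine fun h => (h.const_mul a⁻¹).mono' hPm (ae_of_all _ fun z => ?_)
    by_cases hz : P z = 0
    · simp [hz]
    rw [Real.norm_of_nonneg (hP z), le_inv_mul_iff₀ ha, mul_comm]
    exact mul_le_mul_of_nonneg_left (hK z hz).1 (hP z)
  · refine fun h => (h.const_mul b).mono' (hPm.mul hKm) (ae_of_all _ fun z => ?_)
    by_cases hz : P z = 0
    · simp [hz]
    obtain ⟨haK, hKb⟩ := hK z hz
    rw [Real.norm_of_nonneg (mul_nonneg (hP z) (ha.le.trans haK)), mul_comm]
    exact mul_le_mul_of_nonneg_right hKb (hP z)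

/-- If `P` is not integrable, both integrals on the left and `∫ P` are junk zeros, and the
bounds on the kernels are what makes the two sides vanish together. -/
lemma abs_integral_mul_sub_integral_mul_le (hP : 0 ≤ P) (hPm : AEStronglyMeasurable P μ)
    (hKm : AEStronglyMeasurable K μ) (hK'm : AEStronglyMeasurable K' μ) (ha : 0 < a)
    (ha' : 0 < a') (hK : ∀ z, P z ≠ 0 → a ≤ K z ∧ K z ≤ b)
    (hK' : ∀ z, P z ≠ 0 → a' ≤ K' z ∧ K' z ≤ b) {L : ℝ}
    (hL : ∀ z, P z ≠ 0 → |K z - K' z| ≤ L) :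
    |∫ z, P z * K z ∂μ - ∫ z, P z * K' z ∂μ| ≤ L * ∫ z, P z ∂μ := by
  have hiff := integrable_mul_iff_of_bounds hP hPm hKm ha hK
  have hiff' := integrable_mul_iff_of_bounds hP hPm hK'm ha' hK'
  by_cases hPi : Integrable P μ
  · rw [← integral_sub (hiff.mpr hPi) (hiff'.mpr hPi), ← integral_const_mul L,
      ← Real.norm_eq_abs]
    refine norm_integral_le_of_norm_le (hPi.const_mul L) (ae_of_all _ fun z => ?_)
    by_cases hz : P z = 0
    · simp [hz]
    rw [← mul_sub, norm_mul, Real.norm_of_nonneg (hP z), Real.norm_eq_abs, mul_comm]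
    exact mul_le_mul_of_nonneg_right (hL z hz) (hP z)
  · rw [integral_undef hPi, integral_undef (mt hiff.mp hPi), integral_undef (mt hiff'.mp hPi)]
    simp

end BoundedKernel

lemma mfi_eq_integral_mul_rpow (n m : ℕ) (α : ℝ) (f : Fin m → En n → ℝ) (u : En n) :
    mfi n m α f u =
      ∫ z : Fin m → En n, (∏ j, f j (z j)) * (∑ j, dist u (z j)) ^ (α - m * n) := by
  unfold mfi
  congr 1 with z
  rw [div_eq_mul_inv, ← Real.rpow_neg (Finset.sum_nonneg fun j _ => dist_nonneg), neg_sub]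

theorem mfi_regularity_general (n m : ℕ) (hm : 1 ≤ m) (α : ℝ)
    (hα1 : α < m * n) :
    ∃ C : ℝ, 0 < C ∧ ∀ (r M : ℝ) (x0 : En n) (y : Fin m → En n),
      0 < r → 8 * m ≤ M → (∃ j0, M * r ≤ dist x0 (y j0)) →
      ∀ f : Fin m → En n → ℝ,
        (∀ j, Measurable (f j)) → (∀ j x, 0 ≤ f j x) →
        (∀ j, ∀ z, z ∉ ball (y j) r → f j z = 0) →
        ∀ x ∈ ball x0 r, ∀ x' ∈ ball x0 r,
          |mfi n m α f x - mfi n m α f x'| ≤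
            C * dist x x' * (M * r) ^ (α - m * n - 1) * ∏ j, ∫ z, f j z := by
  set s : ℝ := α - m * n
  have hs : s < 0 := sub_neg.mpr hα1
  have hm1 : (1 : ℝ) ≤ m := by exact_mod_cast hm
  refine ⟨m * -s * 2 ^ (1 - s), mul_pos (by nlinarith) (by positivity), ?_⟩
  rintro r M x0 y hr hM ⟨j0, hfar⟩ f hfm hf0 hfs x hx x' hx'
  have hMr : 4 * r ≤ M * r := by nlinarith
  set P : (Fin m → En n) → ℝ := fun z => ∏ j, f j (z j)
  set K : En n → (Fin m → En n) → ℝ := fun u z => (∑ j, dist u (z j)) ^ s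
  have hsupp : ∀ z, P z ≠ 0 → ∀ j, z j ∈ ball (y j) r := fun z hz j => by
    by_contra h
    exact hz (Finset.prod_eq_zero (Finset.mem_univ j) (hfs j _ h))
  have hKm : ∀ u, AEStronglyMeasurable (K u) :=
    fun u => ((continuous_finsetSum _ fun j _ =>
      continuous_const.dist (continuous_apply j)).measurable.pow_const s).aestronglyMeasurable
  have hPm : AEStronglyMeasurable P :=
    (Finset.measurable_prod _ fun j _ => (hfm j).comp (measurable_pi_apply j)).aestronglyMeasurable
  have hD : ∀ u, 0 < (∑ j, (dist u (y j) + r)) ^ s := fun u =>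
    Real.rpow_pos_of_pos (Finset.sum_pos (fun j _ => by positivity) ⟨j0, Finset.mem_univ _⟩) s
  have hprod : ∫ z, P z = ∏ j, ∫ z, f j z := integral_fintype_prod_eq_prod f
  have hhalf : (M * r / 2) ^ (s - 1) = 2 ^ (1 - s) * (M * r) ^ (s - 1) := by
    rw [Real.div_rpow (by linarith) zero_le_two, div_eq_mul_inv, ← Real.rpow_neg zero_le_two,
      neg_sub, mul_comm]
  rw [mfi_eq_integral_mul_rpow, mfi_eq_integral_mul_rpow, ← hprod]
  calc _ ≤ -s * (M * r / 2) ^ (s - 1) * (Fintype.card (Fin m) * dist x x') * ∫ z, P z :=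
        abs_integral_mul_sub_integral_mul_le (fun z => Finset.prod_nonneg fun j _ => hf0 j _)
          hPm (hKm x) (hKm x') (hD x) (hD x')
          (fun z hz => rpow_sum_dist_bounds_of_far hs.le hMr hfar hx (hsupp z hz))
          (fun z hz => rpow_sum_dist_bounds_of_far hs.le hMr hfar hx' (hsupp z hz))
          (fun z hz => abs_rpow_sum_dist_sub_le_of_far hs.le hMr hfar hx hx' (hsupp z hz))
    _ = _ := by rw [hhalf, Fintype.card_fin]; ring

/-- Regularity of `I_α(f₁, …, f_m)` on the ball `B(x₀, r)` when at least one of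
the supporting balls `B(y_j, r)` is at distance `≥ M r` from `x₀`. -/
theorem mfi_regularity (n m : ℕ) (hn : 1 ≤ n) (hm : 1 ≤ m) (α : ℝ)
    (hα0 : 0 < α) (hα1 : α < m * n) :
    ∃ C : ℝ, 0 < C ∧ ∀ (r M : ℝ) (x0 : En n) (y : Fin m → En n),
      0 < r → 8 * m ≤ M → (∃ j0, M * r ≤ dist x0 (y j0)) →
      ∀ f : Fin m → En n → ℝ,
        (∀ j, Measurable (f j)) → (∀ j x, 0 ≤ f j x) →
        (∀ j, ∀ z, z ∉ ball (y j) r → f j z = 0) →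
        ∀ x ∈ ball x0 r, ∀ x' ∈ ball x0 r,
          |mfi n m α f x - mfi n m α f x'| ≤
            C * dist x x' * (M * r) ^ (α - m * n - 1) * ∏ j, ∫ z, f j z :=
  mfi_regularity_general n m hm α hα1
end
end

section
/- Let n, m ≥ 1 be integers, 1 ≤ l ≤ m and 0 < α < mn. There exists a constant C, depending only on m, n and α, with the following property. Let r > 0, M ≥ 8m, x_0, y_1, …, y_m ∈ ℝ^n (with y_l unused). Let f_l ∈ L^1(ℝ^n) be supported in B(x_0, r) with ∫_{ℝ^n} f_l dx = 0, and for j ≠ l let f_j be nonnegative measurable and supported in B(y_j, r). Then for every x ∈ ℝ^n with |x − x_0| ≥ M r: |I_α(f_1, …, f_m)(x)| ≤ C r (M r)^{α − mn − 1} ‖f_l‖_{L^1(ℝ^n)} ∏_{j ≠ l} ∫_{ℝ^n} f_j(y) dy. -/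
open MeasureTheory ENNReal Filter Metric

noncomputable section

/-! Write `γ = mn - α`. Because `f_l` has mean zero, the kernel `(∑ⱼ |x - y_j|)^{-γ}` may be
replaced by its difference with the kernel in which `|x - y_l|` is frozen to `|x - x₀|`: the
frozen kernel does not depend on `y_l`, so its integral against `f_l(y_l)` vanishes by Fubini.
On the supports the two sums differ by at most `r` and both exceed `Mr/2`, so by the mean value
theorem the kernels differ by at most `γ r (Mr/2)^{-γ-1}`.

If some `f_j` is not integrable, the right-hand side is `0` (the integral of a non-integrable
function is `0` in Lean), and so is the left-hand side: the integrand is then either a.e. zero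
or not integrable, the kernel being bounded below on the bounded supports. -/

theorem abs_rpow_neg_sub_rpow_neg_le {γ a s t : ℝ} (hγ : 0 ≤ γ) (ha : 0 < a) (hs : a ≤ s)
    (ht : a ≤ t) : |s ^ (-γ) - t ^ (-γ)| ≤ γ * a ^ (-γ - 1) * |s - t| := by
  have hderiv : ∀ u ∈ Set.Ici a, HasDerivWithinAt (fun u : ℝ => u ^ (-γ))
      (-γ * u ^ (-γ - 1)) (Set.Ici a) u := fun u hu =>
    (Real.hasDerivAt_rpow_const (Or.inl (ha.trans_le hu).ne')).hasDerivWithinAt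
  have hbound : ∀ u ∈ Set.Ici a, ‖-γ * u ^ (-γ - 1)‖ ≤ γ * a ^ (-γ - 1) := fun u hu => by
    rw [norm_mul, norm_neg, Real.norm_of_nonneg hγ,
      Real.norm_of_nonneg (Real.rpow_nonneg (ha.le.trans hu) _)]
    exact mul_le_mul_of_nonneg_left (Real.rpow_le_rpow_of_nonpos ha hu (by linarith)) hγ
  exact (convex_Ici a).norm_image_sub_le_of_norm_hasDerivWithin_le hderiv hbound ht hs

theorem mem_ball_of_prod_ne_zero {ι E M₀ : Type*} [Fintype ι] [PseudoMetricSpace E]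
    [CommMonoidWithZero M₀] {f : ι → E → M₀} {y : ι → E} (hy : ∏ j, f j (y j) ≠ 0) {j : ι}
    {c : E} {r : ℝ} (hf : ∀ z, z ∉ ball c r → f j z = 0) : y j ∈ ball c r := by
  by_contra h
  exact hy (Finset.prod_eq_zero (Finset.mem_univ j) (hf _ h))

theorem lintegral_fin_nat_prod_eq_prod {k : ℕ} {E : Type*} [MeasurableSpace E]
    {μ : Fin k → Measure E} [∀ i, SigmaFinite (μ i)] {f : Fin k → E → ℝ≥0∞}
    (hf : ∀ i, AEMeasurable (f i) (μ i)) :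
    ∫⁻ x, ∏ i, f i (x i) ∂Measure.pi μ = ∏ i, ∫⁻ x, f i x ∂μ i := by
  induction k with
  | zero => simp
  | succ k ih =>
    rw [← ((measurePreserving_piFinSuccAbove μ 0).symm).lintegral_comp_emb
      (MeasurableEquiv.measurableEmbedding _)]
    simp_rw [MeasurableEquiv.piFinSuccAbove_symm_apply, Fin.insertNthEquiv,
      Fin.prod_univ_succ, Fin.insertNth_zero, Equiv.coe_fn_mk, Fin.cons_succ,
      Fin.zero_succAbove, cast_eq, Fin.cons_zero]
    have hg : AEMeasurable (fun w : Fin k → E => ∏ i, f i.succ (w i))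
        (Measure.pi fun i => μ i.succ) :=
      Finset.aemeasurable_fun_prod _ fun i _ =>
        (hf i.succ).comp_quasiMeasurePreserving (Measure.quasiMeasurePreserving_eval _ i)
    rw [lintegral_prod_mul (hf 0) hg, ih fun i => hf i.succ]

theorem Integrable.of_fin_nat_prod {k : ℕ} {E 𝕜 : Type*} [MeasurableSpace E] [NormedField 𝕜]
    {μ : Fin k → Measure E} [∀ i, SigmaFinite (μ i)] {f : Fin k → E → 𝕜}
    (hf : ∀ i, AEStronglyMeasurable (f i) (μ i)) (hf₀ : ∀ i, ¬ f i =ᵐ[μ i] 0)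
    (h : Integrable (fun x => ∏ i, f i (x i)) (Measure.pi μ)) (i : Fin k) :
    Integrable (f i) (μ i) := by
  refine ⟨hf i, lt_top_iff_ne_top.2 fun hi => (h.2).ne ?_⟩
  have hpos : ∀ j, ∫⁻ x, ‖f j x‖ₑ ∂μ j ≠ 0 := fun j hj => hf₀ j <| by
    filter_upwards [(lintegral_eq_zero_iff' (hf j).enorm).1 hj] with x hx
    simpa using hx
  simp_rw [enorm_eq_nnnorm, nnnorm_prod, ENNReal.ofNNReal_finsetProd, ← enorm_eq_nnnorm]
  rw [lintegral_fin_nat_prod_eq_prod fun j => (hf j).enorm,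
    ← Finset.mul_prod_erase _ _ (Finset.mem_univ i), hi,
    ENNReal.top_mul (Finset.prod_ne_zero_iff.2 fun j _ => hpos j)]

theorem integral_fin_nat_prod_mul_eq_zero_of_not_integrable {k : ℕ} {E : Type*}
    [MeasurableSpace E] {μ : Fin k → Measure E} [∀ i, SigmaFinite (μ i)] {f : Fin k → E → ℝ}
    {K : (Fin k → E) → ℝ} {c : ℝ} (hc : 0 < c) (hf : ∀ i, AEStronglyMeasurable (f i) (μ i))
    (hK : ∀ x, ∏ i, f i (x i) ≠ 0 → c ≤ |K x|) (hint : ¬ ∀ i, Integrable (f i) (μ i)) :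
    ∫ x, (∏ i, f i (x i)) * K x ∂Measure.pi μ = 0 := by
  by_cases h₀ : ∃ i, f i =ᵐ[μ i] 0
  · obtain ⟨i, hi⟩ := h₀
    refine integral_eq_zero_of_ae ?_
    filter_upwards [(Measure.quasiMeasurePreserving_eval μ i).ae hi] with x hx
    simp [Finset.prod_eq_zero (f := fun j => f j (x j)) (Finset.mem_univ i) hx]
  · push Not at h₀
    refine integral_undef fun hfK => hint (Integrable.of_fin_nat_prod hf h₀ ?_)
    have hmeas : AEStronglyMeasurable (fun x => ∏ i, f i (x i)) (Measure.pi μ) :=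
      Finset.aestronglyMeasurable_fun_prod _ fun i _ =>
        (hf i).comp_quasiMeasurePreserving (Measure.quasiMeasurePreserving_eval μ i)
    refine (hfK.norm.const_mul c⁻¹).mono' hmeas (ae_of_all _ fun x => ?_)
    by_cases hx : ∏ i, f i (x i) = 0
    · simp [hx]
    · rw [norm_mul, Real.norm_eq_abs, Real.norm_eq_abs, le_inv_mul_iff₀ hc, mul_comm]
      exact mul_le_mul_of_nonneg_left (hK x hx) (abs_nonneg _)

theorem integral_pi_abs_prod_eq {ι E : Type*} [Fintype ι] [DecidableEq ι] [MeasurableSpace E]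
    {μ : ι → Measure E} [∀ i, SigmaFinite (μ i)] {f : ι → E → ℝ} (l : ι)
    (hf : ∀ j, j ≠ l → ∀ z, 0 ≤ f j z) :
    ∫ y, |∏ j, f j (y j)| ∂Measure.pi μ =
      (∫ z, |f l z| ∂μ l) * ∏ j ∈ Finset.univ.erase l, ∫ z, f j z ∂μ j := by
  simp_rw [Finset.abs_prod]
  rw [integral_fintype_prod_eq_prod (fun j z => |f j z|),
    ← Finset.mul_prod_erase _ _ (Finset.mem_univ l)]
  congr 1
  refine Finset.prod_congr rfl fun j hj => integral_congr_ae (ae_of_all _ fun z => ?_)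
  exact abs_of_nonneg (hf j (Finset.ne_of_mem_erase hj) z)

theorem integral_pi_mul_removeNth {k : ℕ} {E 𝕜 : Type*} [MeasurableSpace E] [RCLike 𝕜]
    {μ : Fin (k + 1) → Measure E} [∀ i, SigmaFinite (μ i)] (l : Fin (k + 1)) (φ : E → 𝕜)
    (ψ : (Fin k → E) → 𝕜) :
    ∫ x, φ (x l) * ψ (l.removeNth x) ∂Measure.pi μ =
      (∫ t, φ t ∂μ l) * ∫ w, ψ w ∂Measure.pi fun j => μ (l.succAbove j) :=
  ((measurePreserving_piFinSuccAbove μ l).integral_comp' fun p => φ p.1 * ψ p.2).trans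
    (integral_prod_mul φ ψ)

theorem abs_integral_mul_le_of_integral_mul_eq_zero {X : Type*} [MeasurableSpace X]
    {μ : Measure X} {g K K₀ : X → ℝ} {B : ℝ} (hg : Integrable g μ)
    (hK : AEStronglyMeasurable K μ) (hgK₀ : Integrable (fun x => g x * K₀ x) μ)
    (h₀ : ∫ x, g x * K₀ x ∂μ = 0) (hB : ∀ x, g x ≠ 0 → |K x - K₀ x| ≤ B) :
    |∫ x, g x * K x ∂μ| ≤ B * ∫ x, |g x| ∂μ := by
  have hbound : ∀ x, ‖g x * K x - g x * K₀ x‖ ≤ B * ‖g x‖ := fun x => by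
    by_cases hx : g x = 0
    · simp [hx]
    · rw [← mul_sub, norm_mul, mul_comm, Real.norm_eq_abs (K x - K₀ x)]
      exact mul_le_mul_of_nonneg_right (hB x hx) (norm_nonneg _)
  have hdiff : Integrable (fun x => g x * K x - g x * K₀ x) μ :=
    (hg.norm.const_mul B).mono' ((hg.1.mul hK).sub hgK₀.1) (ae_of_all _ hbound)
  have hgK : Integrable (fun x => g x * K x) μ :=
    (hdiff.add hgK₀).congr (ae_of_all _ fun x => sub_add_cancel _ _)
  calc |∫ x, g x * K x ∂μ| = ‖∫ x, g x * K x - g x * K₀ x ∂μ‖ := by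
        rw [integral_sub hgK hgK₀, h₀, sub_zero, Real.norm_eq_abs]
    _ ≤ ∫ x, B * ‖g x‖ ∂μ :=
        norm_integral_le_of_norm_le (hg.norm.const_mul B) (ae_of_all _ hbound)
    _ = B * ∫ x, |g x| ∂μ := integral_const_mul B _

section
variable {E : Type*} [PseudoMetricSpace E] [MeasurableSpace E] {μ : Measure E} [SigmaFinite μ]

theorem abs_integral_prod_mul_rpow_neg_le [OpensMeasurableSpace E]
    [SecondCountableTopology E] {k : ℕ} {f : Fin (k + 1) → E → ℝ} {l : Fin (k + 1)}
    {x x₀ : E} {γ r M : ℝ} (hγ : 0 ≤ γ) (hM : 2 ≤ M) (hr : 0 < r)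
    (hf : ∀ j, Integrable (f j) μ) (hfl : ∀ z, z ∉ ball x₀ r → f l z = 0)
    (hfl₀ : ∫ z, f l z ∂μ = 0) (hx : M * r ≤ dist x x₀) :
    |∫ y, (∏ j, f j (y j)) * (∑ j, dist x (y j)) ^ (-γ) ∂Measure.pi fun _ => μ| ≤
      γ * (M * r / 2) ^ (-γ - 1) * r * ∫ y, |∏ j, f j (y j)| ∂Measure.pi fun _ => μ := by
  set S₀ : (Fin (k + 1) → E) → ℝ := fun y => dist x x₀ + ∑ j, dist x (y (l.succAbove j))
  have hMr : 0 < M * r := by nlinarith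
  have hS₀ : ∀ y, M * r ≤ S₀ y := fun y =>
    le_add_of_le_of_nonneg hx (Finset.sum_nonneg fun j _ => dist_nonneg)
  have hK₀_le : ∀ y, ‖S₀ y ^ (-γ)‖ ≤ (M * r) ^ (-γ) := fun y => by
    rw [Real.norm_of_nonneg (Real.rpow_nonneg (hMr.le.trans (hS₀ y)) _)]
    exact Real.rpow_le_rpow_of_nonpos hMr (hS₀ y) (neg_nonpos.2 hγ)
  have hg := Integrable.fintype_prod (μ := fun _ => μ) hf
  have hK₀_meas : Measurable fun y => S₀ y ^ (-γ) := by fun_prop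
  refine abs_integral_mul_le_of_integral_mul_eq_zero hg
    (by fun_prop : Measurable _).aestronglyMeasurable
    (hg.mul_bdd hK₀_meas.aestronglyMeasurable (ae_of_all _ hK₀_le)) ?_ fun y hy => ?_
  · have hsplit : ∀ y : Fin (k + 1) → E, (∏ j, f j (y j)) * S₀ y ^ (-γ) =
        f l (y l) * ((∏ j, f (l.succAbove j) (l.removeNth y j)) *
          (dist x x₀ + ∑ j, dist x (l.removeNth y j)) ^ (-γ)) := fun y => by
      rw [Fin.prod_univ_succAbove _ l, mul_assoc]; rfl
    simp_rw [hsplit]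
    rw [integral_pi_mul_removeNth (μ := fun _ => μ) l (f l) fun w =>
      (∏ j, f (l.succAbove j) (w j)) * (dist x x₀ + ∑ j, dist x (w j)) ^ (-γ), hfl₀, zero_mul]
  · have hyl : dist (y l) x₀ < r := mem_ball_of_prod_ne_zero hy hfl
    have hS : ∑ j, dist x (y j) = dist x (y l) + ∑ j, dist x (y (l.succAbove j)) :=
      Fin.sum_univ_succAbove _ l
    have hdiff : |∑ j, dist x (y j) - S₀ y| ≤ r := by
      rw [hS, add_sub_add_right_eq_sub, dist_comm x, dist_comm x]
      exact (abs_dist_sub_le _ _ _).trans hyl.le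
    have hlow : M * r / 2 ≤ ∑ j, dist x (y j) := by
      have hrest : 0 ≤ ∑ j, dist x (y (l.succAbove j)) :=
        Finset.sum_nonneg fun _ _ => dist_nonneg
      rw [hS]
      nlinarith [dist_triangle x (y l) x₀]
    refine (abs_rpow_neg_sub_rpow_neg_le hγ (half_pos hMr) hlow
      ((half_le_self hMr.le).trans (hS₀ y))).trans ?_
    exact mul_le_mul_of_nonneg_left hdiff (by positivity)

theorem integral_prod_mul_rpow_neg_eq_zero_of_not_integrable {k : ℕ} {f : Fin k → E → ℝ}
    {c : Fin k → E} {x : E} {j₀ : Fin k} {γ r : ℝ} (hγ : 0 ≤ γ) (hr : 0 < r)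
    (hf : ∀ j, AEStronglyMeasurable (f j) μ) (hsupp : ∀ j z, z ∉ ball (c j) r → f j z = 0)
    (hx : r ≤ dist x (c j₀)) (hint : ¬ ∀ j, Integrable (f j) μ) :
    ∫ y, (∏ j, f j (y j)) * (∑ j, dist x (y j)) ^ (-γ) ∂Measure.pi (fun _ => μ) = 0 := by
  set R := ∑ j, (dist x (c j) + r)
  have hR : 0 < R := (by linarith : 0 < dist x (c j₀) + r).trans_le
    (Finset.single_le_sum (f := fun j => dist x (c j) + r) (fun j _ => by positivity)
      (Finset.mem_univ j₀))
  refine integral_fin_nat_prod_mul_eq_zero_of_not_integrable (Real.rpow_pos_of_pos hR (-γ)) hf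
    (fun y hy => ?_) hint
  have hy' : ∀ j, dist (y j) (c j) < r := fun j => mem_ball_of_prod_ne_zero hy (hsupp j)
  have hpos : 0 < ∑ j, dist x (y j) :=
    (by linarith [dist_triangle x (y j₀) (c j₀), hy' j₀] : 0 < dist x (y j₀)).trans_le
      (Finset.single_le_sum (fun j _ => dist_nonneg) (Finset.mem_univ j₀))
  have hle : ∑ j, dist x (y j) ≤ R := Finset.sum_le_sum fun j _ => by
    linarith [dist_triangle x (c j) (y j), dist_comm (y j) (c j), hy' j]
  rw [abs_of_nonneg (Real.rpow_nonneg hpos.le _)]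
  exact Real.rpow_le_rpow_of_nonpos hpos hle (neg_nonpos.2 hγ)

end

theorem mfi_eq_integral_prod_mul_rpow_neg (n m : ℕ) (α : ℝ) (f : Fin m → En n → ℝ) (x : En n) :
    mfi n m α f x =
      ∫ y : Fin m → En n, (∏ j, f j (y j)) * (∑ j, dist x (y j)) ^ (-((m * n : ℝ) - α)) := by
  unfold mfi
  congr 1 with y
  rw [div_eq_mul_inv, Real.rpow_neg (Finset.sum_nonneg fun j _ => dist_nonneg)]

theorem mfi_decay_cancellation_general (n m : ℕ) (l : Fin m) (α : ℝ)
    (hα1 : α < m * n) :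
    ∃ C : ℝ, 0 < C ∧ ∀ (r M : ℝ) (x0 : En n) (y : Fin m → En n),
      0 < r → 8 * m ≤ M →
      ∀ f : Fin m → En n → ℝ,
        Integrable (f l) volume → (∀ z, z ∉ ball x0 r → f l z = 0) →
        (∫ z, f l z) = 0 →
        (∀ j, j ≠ l → Measurable (f j) ∧ (∀ x, 0 ≤ f j x) ∧
          ∀ z, z ∉ ball (y j) r → f j z = 0) →
        ∀ x : En n, M * r ≤ dist x x0 →
          |mfi n m α f x| ≤
            C * r * (M * r) ^ (α - m * n - 1) * (∫ z, |f l z|) *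
              ∏ j ∈ Finset.univ.erase l, ∫ z, f j z := by
  obtain ⟨k, rfl⟩ := Nat.exists_eq_add_one_of_ne_zero l.pos.ne'
  set γ : ℝ := ((k + 1 : ℕ) : ℝ) * n - α
  have hγ : 0 < γ := sub_pos.2 hα1
  refine ⟨γ * 2 ^ (γ + 1), by positivity, fun r M x₀ y hr hM f hfl hfl_supp hfl₀ hf x hx => ?_⟩
  have hM2 : 2 ≤ M := le_trans (by norm_cast; omega) hM
  rw [mfi_eq_integral_prod_mul_rpow_neg, mul_assoc _ (∫ z, |f l z|),
    ← integral_pi_abs_prod_eq (μ := fun _ => volume) l fun j hj => (hf j hj).2.1]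
  by_cases hint : ∀ j, Integrable (f j) volume
  · refine (abs_integral_prod_mul_rpow_neg_le hγ.le hM2 hr hint hfl_supp hfl₀ hx).trans_eq ?_
    rw [show α - ((k + 1 : ℕ) : ℝ) * n - 1 = -(γ + 1) by ring, show -γ - 1 = -(γ + 1) by ring,
      Real.div_rpow (by positivity) zero_le_two, Real.rpow_neg zero_le_two]
    field_simp
  · have hmeas : ∀ j, AEStronglyMeasurable (f j) volume := fun j => by
      rcases eq_or_ne j l with rfl | hj
      · exact hfl.1
      · exact (hf j hj).1.aestronglyMeasurable
    have hsupp : ∀ j z, z ∉ ball (Function.update y l x₀ j) r → f j z = 0 := fun j => by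
      rcases eq_or_ne j l with rfl | hj
      · simpa using hfl_supp
      · simpa [Function.update_of_ne hj] using (hf j hj).2.2
    have hxl : r ≤ dist x (Function.update y l x₀ l) := by
      rw [Function.update_self]
      nlinarith
    calc _ = (0 : ℝ) := abs_eq_zero.2
          (integral_prod_mul_rpow_neg_eq_zero_of_not_integrable hγ.le hr hmeas hsupp hxl hint)
      _ ≤ _ := by positivity

/-- Decay of `I_α(f₁, …, f_m)` far from the support of the mean-zero factor
`f_l`. -/
theorem mfi_decay_cancellation (n m : ℕ) (hn : 1 ≤ n) (hm : 1 ≤ m) (l : Fin m) (α : ℝ)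
    (hα0 : 0 < α) (hα1 : α < m * n) :
    ∃ C : ℝ, 0 < C ∧ ∀ (r M : ℝ) (x0 : En n) (y : Fin m → En n),
      0 < r → 8 * m ≤ M →
      ∀ f : Fin m → En n → ℝ,
        Integrable (f l) volume → (∀ z, z ∉ ball x0 r → f l z = 0) →
        (∫ z, f l z) = 0 →
        (∀ j, j ≠ l → Measurable (f j) ∧ (∀ x, 0 ≤ f j x) ∧
          ∀ z, z ∉ ball (y j) r → f j z = 0) →
        ∀ x : En n, M * r ≤ dist x x0 →
          |mfi n m α f x| ≤
            C * r * (M * r) ^ (α - m * n - 1) * (∫ z, |f l z|) *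
              ∏ j ∈ Finset.univ.erase l, ∫ z, f j z :=
  mfi_decay_cancellation_general n m l α hα1
end
end
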